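/- If k(Λ) ≥ Λ(Λ−1)(2Λ+3)²(2Λ+4)⁴/(4π⁴) for all Λ, then the largest eigenvalue of X^{Λ+1} is strictly greater than the largest eigenvalue of X^Λ for every Λ ∈ ℕ. -/

import Mathlib

/-!
`X^Λ` is the zero-diagonal Jacobi matrix of the path on `2Λ + 1` vertices with edge weights
`b_n / 2`, and `1 ≤ b_n ≤ b_Λ` on every edge. On the path with `m + 1` vertices the sine vector
`w_j = sin (j π / (m + 2))` vanishes at `j = 0, m + 2`, is positive in between and satisfies
`w_{j-1} + w_{j+1} = 2 cos (π / (m + 2)) w_j`. The weighted AM-GM inequality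
`2 v_j v_{j+1} ≤ v_j² w_{j+2} / w_{j+1} + v_{j+1}² w_{j+1} / w_{j+2}`, summed along the path, gives
`α₁(Λ) ≤ b_Λ cos (π / (2Λ + 2))`; the Rayleigh quotient of the sine vector itself gives
`α₁(Λ + 1) ≥ cos (π / (2Λ + 4))`. Finally `b_Λ ≤ 1 + Λ(Λ - 1) / (2k)`, and the hypothesis on `k`
makes this excess smaller than `cos (π / (2Λ + 4)) - cos (π / (2Λ + 2))`, which Jordan's
inequality `sin x ≥ 2x / π` bounds below by `2 (θ² - θ'²) / π²`.
-/

/-- `b_m = √(1 + m(m-1)/k)`. -/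
noncomputable def bcoef (k : ℝ) (m : ℤ) : ℝ := Real.sqrt (1 + (m * (m - 1)) / k)

/-- The matrix of the coordinate `x₁` on the fuzzy circle `S¹_Λ`. -/
noncomputable def XLam (Λ : ℕ) (k : ℝ) : Matrix (Fin (2*Λ+1)) (Fin (2*Λ+1)) ℝ :=
  fun i j =>
    if (i : ℕ) + 1 = j then bcoef k ((Λ : ℤ) - (i : ℕ)) / 2
    else if (j : ℕ) + 1 = i then bcoef k ((Λ : ℤ) - (j : ℕ)) / 2
    else 0

open Real Matrix Finset Module.End

theorem LinearMap.IsSymmetric.inner_apply_self_le {E : Type*} [NormedAddCommGroup E]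
    [InnerProductSpace ℝ E] [FiniteDimensional ℝ E] {T : E →ₗ[ℝ] E} (hT : T.IsSymmetric)
    {β : ℝ} (hβ : ∀ μ, HasEigenvalue T μ → μ ≤ β) (x : E) :
    inner ℝ (T x) x ≤ β * ‖x‖ ^ 2 := by
  set b := hT.eigenvectorBasis rfl
  rw [← b.repr.inner_map_map, ← b.repr.norm_map, ← real_inner_self_eq_norm_sq,
    PiLp.inner_apply, PiLp.inner_apply, mul_sum]
  refine sum_le_sum fun i _ => ?_
  rw [hT.eigenvectorBasis_apply_self_apply rfl x]
  simp only [RCLike.inner_apply, conj_trivial]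
  nlinarith [hβ _ (hT.hasEigenvalue_eigenvalues rfl i), sq_nonneg (b.repr x i)]

theorem Matrix.IsHermitian.dotProduct_mulVec_le {n : Type*} [Fintype n] [DecidableEq n]
    {A : Matrix n n ℝ} (hA : A.IsHermitian) {β : ℝ}
    (hβ : ∀ μ, HasEigenvalue (toLin' A) μ → μ ≤ β) (x : n → ℝ) :
    x ⬝ᵥ (A *ᵥ x) ≤ β * (x ⬝ᵥ x) := by
  have hT : (toEuclideanLin A).IsSymmetric := isSymmetric_toEuclideanLin_iff.mpr hA
  have hβ' : ∀ μ, HasEigenvalue (toEuclideanLin A) μ → μ ≤ β := fun μ hμ => by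
    refine hβ μ (hasEigenvalue_iff_mem_spectrum.mpr ?_)
    rw [hasEigenvalue_iff_mem_spectrum] at hμ
    simpa [spectrum_toLin', spectrum_toLpLin] using hμ
  have := hT.inner_apply_self_le hβ' (WithLp.toLp 2 x)
  rw [EuclideanSpace.norm_sq_eq] at this
  simpa [toLpLin_apply, EuclideanSpace.inner_eq_star_dotProduct, dotProduct_comm, dotProduct,
    sq] using this

theorem Matrix.exists_mulVec_eq_smul_of_hasEigenvalue {n : Type*} [Fintype n] [DecidableEq n]
    {A : Matrix n n ℝ} {μ : ℝ} (h : HasEigenvalue (toLin' A) μ) : ∃ v ≠ 0, A *ᵥ v = μ • v := by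
  obtain ⟨v, hv⟩ := h.exists_hasEigenvector
  exact ⟨v, hv.2, by simpa using hv.apply_eq_smul⟩

theorem two_mul_mul_le_sq_div_mul_add {p q : ℝ} (hp : 0 < p) (hq : 0 < q) (a b : ℝ) :
    2 * (a * b) ≤ a ^ 2 / p * q + b ^ 2 / q * p := by
  rw [div_mul_eq_mul_div, div_mul_eq_mul_div, div_add_div _ _ hp.ne' hq.ne',
    le_div_iff₀ (mul_pos hp hq)]
  nlinarith [sq_nonneg (a * q - b * p)]

section PathGraph

variable {m : ℕ} {w : ℕ → ℝ} {c : ℝ}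

theorem sum_mul_add_shift_eq (hw₀ : w 0 = 0) (hw : w (m + 2) = 0) (x : Fin (m + 1) → ℝ) :
    ∑ i : Fin (m + 1), x i * (w i + w (i + 2)) =
      ∑ j : Fin m, (x j.succ * w (j + 1) + x j.castSucc * w (j + 2)) := by
  simp only [mul_add, sum_add_distrib]
  rw [Fin.sum_univ_succ (f := fun i => x i * w i),
    Fin.sum_univ_castSucc (f := fun i => x i * w (i + 2))]
  simp [hw₀, hw]

theorem sum_mul_succ_eq_of_add_eq (hw₀ : w 0 = 0) (hw : w (m + 2) = 0)
    (hrec : ∀ j, w j + w (j + 2) = 2 * c * w (j + 1)) :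
    ∑ j : Fin m, w (j + 1) * w (j + 2) = c * ∑ i : Fin (m + 1), w (i + 1) ^ 2 := by
  have h := sum_mul_add_shift_eq hw₀ hw (fun i => w (i + 1))
  simp only [hrec, Fin.val_succ, Fin.val_castSucc] at h
  have hl : ∑ i : Fin (m + 1), w (i + 1) * (2 * c * w (i + 1)) =
      2 * (c * ∑ i : Fin (m + 1), w (i + 1) ^ 2) := by
    rw [mul_sum, mul_sum]; exact sum_congr rfl fun _ _ => by ring
  have hr : ∑ j : Fin m, (w (j + 1 + 1) * w (j + 1) + w (j + 1) * w (j + 2)) =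
      2 * ∑ j : Fin m, w (j + 1) * w (j + 2) := by
    rw [mul_sum]; exact sum_congr rfl fun _ _ => by ring
  linarith

theorem sum_mul_succ_le_of_add_eq (hw₀ : w 0 = 0) (hw : w (m + 2) = 0)
    (hrec : ∀ j, w j + w (j + 2) = 2 * c * w (j + 1)) (hpos : ∀ j, 0 < j → j ≤ m + 1 → 0 < w j)
    (v : Fin (m + 1) → ℝ) :
    ∑ j : Fin m, v j.castSucc * v j.succ ≤ c * ∑ i, v i ^ 2 := by
  have h := sum_mul_add_shift_eq hw₀ hw (fun i => v i ^ 2 / w (i + 1))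
  have hl : ∑ i : Fin (m + 1), v i ^ 2 / w (i + 1) * (w i + w (i + 2)) =
      2 * (c * ∑ i, v i ^ 2) := by
    rw [mul_sum, mul_sum]
    refine sum_congr rfl fun i _ => ?_
    rw [hrec]
    field_simp [(hpos (i + 1) (by omega) (by omega)).ne']
  have hamgm (j : Fin m) : 2 * (v j.castSucc * v j.succ) ≤
      v j.succ ^ 2 / w (j.succ + 1) * w (j + 1) +
        v j.castSucc ^ 2 / w (j.castSucc + 1) * w (j + 2) := by
    rw [add_comm, Fin.val_succ, Fin.val_castSucc]
    exact two_mul_mul_le_sq_div_mul_add (hpos (j + 1) (by omega) (by omega))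
        (hpos (j + 2) (by omega) (by omega)) (v j.castSucc) (v j.succ)
  have := sum_le_sum fun j (_ : j ∈ univ) => hamgm j
  rw [← mul_sum] at this
  beta_reduce at h
  linarith

end PathGraph

/-- Vertex `i` of the path on `m + 1` vertices carries `pathSine m (i + 1)`; the zeros at `0` and
`m + 2` play the role of the missing neighbours of the two endpoints. -/
noncomputable def pathSine (m j : ℕ) : ℝ := sin (j * (π / (m + 2)))

section PathSine

variable (m : ℕ)

theorem pathSine_zero : pathSine m 0 = 0 := by simp [pathSine]

theorem pathSine_add_two : pathSine m (m + 2) = 0 := by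
  rw [pathSine, Nat.cast_add, Nat.cast_two, mul_div_cancel₀ _ (by positivity), sin_pi]

theorem pathSine_add_pathSine (j : ℕ) :
    pathSine m j + pathSine m (j + 2) = 2 * cos (π / (m + 2)) * pathSine m (j + 1) := by
  simp only [pathSine, sin_add_sin]
  rw [← cos_neg]
  push_cast
  ring_nf

theorem pathSine_pos {j : ℕ} (hj₀ : 0 < j) (hj : j ≤ m + 1) : 0 < pathSine m j := by
  have hj' : (j : ℝ) < m + 2 := by exact_mod_cast Nat.lt_succ_of_le hj
  apply sin_pos_of_pos_of_lt_pi (by positivity)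
  calc (j : ℝ) * (π / (m + 2)) < (m + 2) * (π / (m + 2)) := by gcongr
    _ = π := mul_div_cancel₀ _ (by positivity)

theorem sum_pathSine_mul_succ :
    ∑ j : Fin m, pathSine m (j + 1) * pathSine m (j + 2) =
      cos (π / (m + 2)) * ∑ i : Fin (m + 1), pathSine m (i + 1) ^ 2 :=
  sum_mul_succ_eq_of_add_eq (pathSine_zero m) (pathSine_add_two m) (pathSine_add_pathSine m)

theorem sum_mul_succ_le_cos (v : Fin (m + 1) → ℝ) :
    ∑ j : Fin m, v j.castSucc * v j.succ ≤ cos (π / (m + 2)) * ∑ i, v i ^ 2 :=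
  sum_mul_succ_le_of_add_eq (pathSine_zero m) (pathSine_add_two m) (pathSine_add_pathSine m)
    (fun _ => pathSine_pos m) v

end PathSine

def symmTridiag {m : ℕ} (a : ℕ → ℝ) : Matrix (Fin (m + 1)) (Fin (m + 1)) ℝ :=
  fun i j => if (i : ℕ) + 1 = j then a i else if (j : ℕ) + 1 = i then a j else 0

theorem symmTridiag_isHermitian {m : ℕ} (a : ℕ → ℝ) : (symmTridiag (m := m) a).IsHermitian := by
  ext i j
  simp only [conjTranspose_apply, symmTridiag, star_trivial]
  split_ifs <;> first | rfl | omega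

theorem sum_sum_ite_succ_eq {m : ℕ} (g : Fin (m + 1) → Fin (m + 1) → ℝ) :
    ∑ i : Fin (m + 1), ∑ j : Fin (m + 1), (if (i : ℕ) + 1 = j then g i j else 0) =
      ∑ j : Fin m, g j.castSucc j.succ := by
  have hcond (i : Fin (m + 1)) (j : Fin m) : ((i : ℕ) + 1 = j.succ) ↔ i = j.castSucc := by
    simp [Fin.ext_iff]
  rw [Finset.sum_comm, Fin.sum_univ_succ]
  simp only [hcond, Fin.val_zero, Nat.add_one_ne_zero, if_false, sum_const_zero, zero_add,
    sum_ite_eq', mem_univ, if_true]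

theorem dotProduct_symmTridiag_mulVec {m : ℕ} (a : ℕ → ℝ) (x : Fin (m + 1) → ℝ) :
    x ⬝ᵥ (symmTridiag a *ᵥ x) = 2 * ∑ j : Fin m, a j * (x j.castSucc * x j.succ) := by
  have hsplit : ∀ i j, x i * (symmTridiag a i j * x j) =
      (if (i : ℕ) + 1 = j then a i * (x i * x j) else 0) +
        (if (j : ℕ) + 1 = i then a j * (x j * x i) else 0) := by
    intro i j
    simp only [symmTridiag]
    split_ifs <;> first | omega | ring
  simp only [dotProduct, mulVec, mul_sum, hsplit, sum_add_distrib]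
  have hswap := sum_sum_ite_succ_eq (fun i j => a i * (x i * x j))
  rw [Finset.sum_comm] at hswap
  rw [hswap, sum_sum_ite_succ_eq, ← two_mul, mul_sum]
  simp only [Fin.val_castSucc]

theorem symmTridiag_eigenvalue_le {m : ℕ} {a : ℕ → ℝ} {M : ℝ} (hM : 0 ≤ M)
    (ha : ∀ j < m, |a j| ≤ M) {α : ℝ} (hα : HasEigenvalue (toLin' (symmTridiag (m := m) a)) α) :
    α ≤ 2 * M * cos (π / (m + 2)) := by
  obtain ⟨v, hv₀, hv⟩ := exists_mulVec_eq_smul_of_hasEigenvalue hα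
  have hvv : 0 < v ⬝ᵥ v := by simpa using dotProduct_star_self_pos_iff.mpr hv₀
  have hform : α * (v ⬝ᵥ v) = 2 * ∑ j : Fin m, a j * (v j.castSucc * v j.succ) := by
    rw [← dotProduct_symmTridiag_mulVec, hv, dotProduct_smul, smul_eq_mul]
  have hbound : ∑ j : Fin m, a j * (v j.castSucc * v j.succ) ≤
      M * (cos (π / (m + 2)) * (v ⬝ᵥ v)) :=
    calc ∑ j : Fin m, a j * (v j.castSucc * v j.succ)
        ≤ ∑ j : Fin m, M * (|v j.castSucc| * |v j.succ|) := by
          refine sum_le_sum fun j _ => ?_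
          calc a j * (v j.castSucc * v j.succ) ≤ |a j * (v j.castSucc * v j.succ)| :=
                le_abs_self _
            _ = |a j| * (|v j.castSucc| * |v j.succ|) := by rw [abs_mul, abs_mul]
            _ ≤ M * (|v j.castSucc| * |v j.succ|) := by gcongr; exact ha j j.isLt
      _ ≤ M * (cos (π / (m + 2)) * ∑ i, |v i| ^ 2) := by
          rw [← mul_sum]; exact mul_le_mul_of_nonneg_left (sum_mul_succ_le_cos m fun i => |v i|) hM
      _ = M * (cos (π / (m + 2)) * (v ⬝ᵥ v)) := by simp [dotProduct, sq]
  exact le_of_mul_le_mul_right (by linarith) hvv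

theorem mul_cos_le_of_forall_symmTridiag_eigenvalue_le {m : ℕ} {a : ℕ → ℝ} {c : ℝ}
    (ha : ∀ j < m, c ≤ a j) {β : ℝ}
    (hβ : ∀ μ, HasEigenvalue (toLin' (symmTridiag (m := m) a)) μ → μ ≤ β) :
    2 * c * cos (π / (m + 2)) ≤ β := by
  set y : Fin (m + 1) → ℝ := fun i => pathSine m (i + 1)
  have hyy : 0 < y ⬝ᵥ y := by
    refine sum_pos (fun i _ => ?_) univ_nonempty
    exact mul_pos (pathSine_pos m (by omega) (by omega)) (pathSine_pos m (by omega) (by omega))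
  have hray := (symmTridiag_isHermitian a).dotProduct_mulVec_le hβ y
  rw [dotProduct_symmTridiag_mulVec] at hray
  have hlow : c * (cos (π / (m + 2)) * (y ⬝ᵥ y)) ≤ ∑ j : Fin m, a j * (y j.castSucc * y j.succ) :=
    calc c * (cos (π / (m + 2)) * (y ⬝ᵥ y))
        = ∑ j : Fin m, c * (y j.castSucc * y j.succ) := by
          have hyy' : y ⬝ᵥ y = ∑ i : Fin (m + 1), pathSine m (i + 1) ^ 2 := by
            simp [y, dotProduct, sq]
          rw [← mul_sum, hyy', ← sum_pathSine_mul_succ]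
          rfl
      _ ≤ ∑ j : Fin m, a j * (y j.castSucc * y j.succ) := by
          refine sum_le_sum fun j _ => mul_le_mul_of_nonneg_right (ha j j.isLt) ?_
          exact (mul_pos (pathSine_pos m (by omega) (by omega))
            (pathSine_pos m (by omega) (by omega))).le
  exact le_of_mul_le_mul_right (by linarith) hyy

theorem intCast_mul_sub_one_nonneg (m : ℤ) : (0 : ℝ) ≤ m * (m - 1) := by
  have : 0 ≤ m * (m - 1) := by
    rcases le_or_gt m 0 with h | h <;> nlinarith
  exact_mod_cast this

theorem one_le_bcoef {k : ℝ} (hk : 0 ≤ k) (m : ℤ) : 1 ≤ bcoef k m := by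
  rw [bcoef, one_le_sqrt]
  linarith [div_nonneg (intCast_mul_sub_one_nonneg m) hk]

theorem bcoef_le_bcoef {k : ℝ} (hk : 0 ≤ k) {m n : ℤ} (h : m * (m - 1) ≤ n * (n - 1)) :
    bcoef k m ≤ bcoef k n := by
  have h' : (m : ℝ) * (m - 1) ≤ n * (n - 1) := by exact_mod_cast h
  unfold bcoef
  gcongr

theorem XLam_eq_symmTridiag (Λ : ℕ) (k : ℝ) :
    XLam Λ k = symmTridiag fun n => bcoef k ((Λ : ℤ) - n) / 2 :=
  rfl

theorem XLam_eigenvalue_le {Λ : ℕ} {k α : ℝ} (hk : 0 ≤ k)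
    (hα : HasEigenvalue (toLin' (XLam Λ k)) α) : α ≤ bcoef k Λ * cos (π / (2 * Λ + 2)) := by
  have hb : ∀ j < 2 * Λ, |bcoef k ((Λ : ℤ) - j) / 2| ≤ bcoef k Λ / 2 := fun j hj => by
    rw [abs_of_nonneg (by linarith [one_le_bcoef hk ((Λ : ℤ) - j)])]
    gcongr
    exact bcoef_le_bcoef hk (by nlinarith)
  rw [XLam_eq_symmTridiag] at hα
  have := symmTridiag_eigenvalue_le (by linarith [one_le_bcoef hk Λ]) hb hα
  rw [Nat.cast_mul, Nat.cast_two] at this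
  linarith

theorem cos_le_of_forall_XLam_eigenvalue_le {Λ : ℕ} {k β : ℝ} (hk : 0 ≤ k)
    (hβ : ∀ μ, HasEigenvalue (toLin' (XLam Λ k)) μ → μ ≤ β) : cos (π / (2 * Λ + 2)) ≤ β := by
  rw [XLam_eq_symmTridiag] at hβ
  have := mul_cos_le_of_forall_symmTridiag_eigenvalue_le (c := 1 / 2)
    (fun j _ => by linarith [one_le_bcoef hk ((Λ : ℤ) - j)]) hβ
  rw [Nat.cast_mul, Nat.cast_two] at this
  linarith
theorem mul_sq_sub_sq_le_cos_sub_cos {x y : ℝ} (hx : 0 ≤ x) (hxy : x ≤ y) (hxy' : x + y ≤ π) :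
    2 / π ^ 2 * (y ^ 2 - x ^ 2) ≤ cos x - cos y := by
  have hπ := pi_pos
  have hsum : 2 / π * ((x + y) / 2) ≤ sin ((x + y) / 2) := mul_le_sin (by linarith) (by linarith)
  have hdiff : 2 / π * ((y - x) / 2) ≤ sin ((y - x) / 2) := mul_le_sin (by linarith) (by linarith)
  have hsum₀ : 0 ≤ 2 / π * ((x + y) / 2) := mul_nonneg (by positivity) (by linarith)
  have hdiff₀ : 0 ≤ 2 / π * ((y - x) / 2) := mul_nonneg (by positivity) (by linarith)
  rw [cos_sub_cos, show (x - y) / 2 = -((y - x) / 2) by ring, sin_neg]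
  calc 2 / π ^ 2 * (y ^ 2 - x ^ 2) = 2 * (2 / π * ((x + y) / 2) * (2 / π * ((y - x) / 2))) := by
        field_simp; ring
    _ ≤ 2 * (sin ((x + y) / 2) * sin ((y - x) / 2)) := by
        gcongr 2 * ?_
        exact mul_le_mul hsum hdiff hdiff₀ (hsum₀.trans hsum)
    _ = _ := by ring

theorem div_le_cos_sub_cos {L : ℝ} (hL : 0 ≤ L) :
    8 * (2 * L + 3) / ((2 * L + 2) ^ 2 * (2 * L + 4) ^ 2) ≤
      cos (π / (2 * L + 4)) - cos (π / (2 * L + 2)) := by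
  have hπ := pi_pos
  have hθ : π / (2 * L + 4) ≤ π / (2 * L + 2) :=
    div_le_div_of_nonneg_left hπ.le (by positivity) (by linarith)
  have hθ' : π / (2 * L + 2) ≤ π / 2 :=
    div_le_div_of_nonneg_left hπ.le (by positivity) (by linarith)
  convert mul_sq_sub_sq_le_cos_sub_cos (by positivity) hθ (by linarith) using 1
  field_simp
  ring

theorem pi_pow_four_div_lt {L : ℝ} (hL : 0 ≤ L) :
    2 * π ^ 4 / ((2 * L + 3) ^ 2 * (2 * L + 4) ^ 4) <
      8 * (2 * L + 3) / ((2 * L + 2) ^ 2 * (2 * L + 4) ^ 2) := by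
  rw [div_lt_div_iff₀ (by positivity) (by positivity)]
  have hπ : π ^ 4 < 100 :=
    calc π ^ 4 < 3.15 ^ 4 := by gcongr; exact pi_lt_d2
      _ < 100 := by norm_num
  have hC : 27 ≤ (2 * L + 3) ^ 3 :=
    le_trans (by norm_num) (pow_le_pow_left₀ (by norm_num) (by linarith : (3 : ℝ) ≤ 2 * L + 3) 3)
  calc 2 * π ^ 4 * ((2 * L + 2) ^ 2 * (2 * L + 4) ^ 2)
      ≤ 2 * π ^ 4 * ((2 * L + 4) ^ 2 * (2 * L + 4) ^ 2) := by gcongr; linarith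
    _ < 2 * 100 * ((2 * L + 4) ^ 2 * (2 * L + 4) ^ 2) := by gcongr
    _ = 8 * 25 * ((2 * L + 4) ^ 2 * (2 * L + 4) ^ 2) := by norm_num
    _ ≤ 8 * (2 * L + 3) ^ 3 * ((2 * L + 4) ^ 2 * (2 * L + 4) ^ 2) := by gcongr; linarith
    _ = _ := by ring

noncomputable def kThreshold (Λ : ℕ) : ℝ :=
  (Λ : ℝ) * ((Λ : ℝ) - 1) * (2 * (Λ : ℝ) + 3) ^ 2 * (2 * (Λ : ℝ) + 4) ^ 4 / (4 * π ^ 4)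

theorem natCast_mul_sub_one_nonneg (Λ : ℕ) : (0 : ℝ) ≤ Λ * (Λ - 1) := by
  simpa using intCast_mul_sub_one_nonneg Λ

theorem kThreshold_nonneg (Λ : ℕ) : 0 ≤ kThreshold Λ :=
  div_nonneg (mul_nonneg (mul_nonneg (natCast_mul_sub_one_nonneg Λ) (by positivity))
    (by positivity)) (by positivity)

theorem div_le_of_kThreshold_le {Λ : ℕ} {k : ℝ} (hk : kThreshold Λ ≤ k) :
    (Λ : ℝ) * (Λ - 1) / k ≤ 4 * π ^ 4 / ((2 * Λ + 3) ^ 2 * (2 * Λ + 4) ^ 4) := by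
  rcases (natCast_mul_sub_one_nonneg Λ).eq_or_lt with h₀ | hpos
  · rw [← h₀, zero_div]
    positivity
  · have hk₀ : 0 < k := lt_of_lt_of_le (by unfold kThreshold; positivity) hk
    rw [kThreshold, div_le_iff₀ (by positivity)] at hk
    rw [div_le_div_iff₀ hk₀ (by positivity)]
    linarith

theorem bcoef_mul_cos_lt {Λ : ℕ} {k : ℝ} (hk : kThreshold Λ ≤ k) :
    bcoef k Λ * cos (π / (2 * Λ + 2)) < cos (π / (2 * Λ + 4)) := by
  set d := (Λ : ℝ) * (Λ - 1) / k
  have hd₀ : 0 ≤ d := div_nonneg (natCast_mul_sub_one_nonneg Λ) ((kThreshold_nonneg Λ).trans hk)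
  have hb : bcoef k Λ = √(1 + d) := by simp [bcoef, d]
  have hcos : 0 ≤ cos (π / (2 * Λ + 2)) := cos_nonneg_of_mem_Icc
    ⟨by linarith [pi_pos, (by positivity : 0 ≤ π / (2 * (Λ : ℝ) + 2))],
      div_le_div_of_nonneg_left pi_pos.le (by positivity) (by linarith)⟩
  have hgap := div_le_cos_sub_cos (Nat.cast_nonneg (α := ℝ) Λ)
  have hsmall := pi_pow_four_div_lt (Nat.cast_nonneg (α := ℝ) Λ)
  have hd : d ≤ 2 * (2 * π ^ 4 / ((2 * Λ + 3) ^ 2 * (2 * Λ + 4) ^ 4)) :=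
    (div_le_of_kThreshold_le hk).trans_eq (by ring)
  calc bcoef k Λ * cos (π / (2 * Λ + 2)) ≤ (1 + d / 2) * cos (π / (2 * Λ + 2)) := by
        rw [hb]; exact mul_le_mul_of_nonneg_right (sqrt_one_add_le (by linarith)) hcos
    _ ≤ cos (π / (2 * Λ + 2)) + d / 2 := by nlinarith [cos_le_one (π / (2 * Λ + 2))]
    _ < cos (π / (2 * Λ + 4)) := by linarith

theorem stmt_10 (k : ℕ → ℝ)
    (hk : ∀ Λ : ℕ, (Λ : ℝ) * ((Λ : ℝ) - 1) * (2 * (Λ : ℝ) + 3) ^ 2 * (2 * (Λ : ℝ) + 4) ^ 4 /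
        (4 * Real.pi ^ 4) ≤ k Λ)
    (α₁ : ℕ → ℝ)
    (hα₁ : ∀ Λ : ℕ, 0 < Λ →
      IsGreatest {α : ℝ | Module.End.HasEigenvalue (Matrix.toLin' (XLam Λ (k Λ))) α} (α₁ Λ)) :
    ∀ Λ : ℕ, 0 < Λ → α₁ Λ < α₁ (Λ + 1) := by
  have hk₀ (Λ : ℕ) : 0 ≤ k Λ := (kThreshold_nonneg Λ).trans (hk Λ)
  intro Λ hΛ
  calc α₁ Λ ≤ bcoef (k Λ) Λ * cos (π / (2 * Λ + 2)) := XLam_eigenvalue_le (hk₀ Λ) (hα₁ Λ hΛ).1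
    _ < cos (π / (2 * Λ + 4)) := bcoef_mul_cos_lt (hk Λ)
    _ = cos (π / (2 * ↑(Λ + 1) + 2)) := by push_cast; ring_nf
    _ ≤ α₁ (Λ + 1) :=
      cos_le_of_forall_XLam_eigenvalue_le (hk₀ _) fun _ hμ => (hα₁ (Λ + 1) Λ.succ_pos).2 hμ
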